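/- arXiv:1201.0238 — 2 statements merged into one kernel-verified Lean document; each statement's English description precedes it below -/
import Mathlib

section
/- Let K : ℝ → ℝ be a bounded integrable kernel, and let (X, Y) be a pair of real random variables with a joint density p_{X,Y} bounded by p̄₂. Define Z_X = b^{-1/2} K((x−X)/b) and Z_Y = b^{-1/2} K((x−Y)/b) for b > 0. Then |E[(Z_X − E Z_X)(Z_Y − E Z_Y)]| ≤ C·b, where C depends only on p̄₂, the marginal density bounds, and ∫|K|. -/
open MeasureTheory ProbabilityTheory

/-!
A density bounded by `p̄` makes the law of a random vector at most `p̄ • volume`, so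
`|E g(T)| ≤ p̄ ∫ |g|`. Writing the covariance as `E[k(X) k(Y)] - E k(X) E k(Y)` with
`k u = b^{-1/2} K((x - u)/b)`, this bounds it by `(p̄₂ + p̄₁²) (∫ |k|)²`, and the substitution
`t = (x - u)/b` gives `∫ |k| = √b ∫ |K|`.
-/

theorem ofReal_integral_le_lintegral_ofReal {α : Type*} [MeasurableSpace α] {μ : Measure α}
    (f : α → ℝ) : ENNReal.ofReal (∫ a, f a ∂μ) ≤ ∫⁻ a, ENNReal.ofReal (f a) ∂μ := by
  by_cases hf : Integrable f μ
  · refine ENNReal.ofReal_le_of_le_toReal ?_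
    rw [integral_eq_lintegral_pos_part_sub_lintegral_neg_part hf]
    exact sub_le_self _ ENNReal.toReal_nonneg
  · simp [integral_undef hf]

section BoundedDensity

variable {α Ω : Type*} [MeasureSpace α] [MeasurableSpace Ω] {μ : Measure Ω} {T : Ω → α}
  {M : ℝ}

theorem map_le_smul_volume_of_density_le {p : α → ℝ} (hT : Measurable T) (hp : ∀ z, p z ≤ M)
    (hdens : ∀ s, MeasurableSet s → μ (T ⁻¹' s) = ENNReal.ofReal (∫ z in s, p z)) :
    μ.map T ≤ ENNReal.ofReal M • volume := by
  refine Measure.le_iff.2 fun s hs => ?_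
  calc μ.map T s = ENNReal.ofReal (∫ z in s, p z) := by rw [Measure.map_apply hT hs, hdens s hs]
    _ ≤ ∫⁻ z in s, ENNReal.ofReal (p z) := ofReal_integral_le_lintegral_ofReal p
    _ ≤ ∫⁻ _ in s, ENNReal.ofReal M := lintegral_mono fun z => ENNReal.ofReal_le_ofReal (hp z)
    _ = (ENNReal.ofReal M • volume) s := by rw [setLIntegral_const]; rfl

theorem pos_of_map_le_smul_volume [IsProbabilityMeasure μ] (hT : AEMeasurable T μ)
    (h : μ.map T ≤ ENNReal.ofReal M • volume) : 0 < M := by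
  by_contra hM
  have := Measure.isProbabilityMeasure_map hT
  refine IsProbabilityMeasure.ne_zero (μ.map T) (le_antisymm ?_ (Measure.zero_le _))
  simpa [ENNReal.ofReal_eq_zero.2 (not_lt.1 hM)] using h

theorem abs_integral_comp_le_of_map_le_smul_volume {g : α → ℝ} (hT : AEMeasurable T μ)
    (hM : 0 ≤ M) (h : μ.map T ≤ ENNReal.ofReal M • volume) (hg : Integrable g) :
    |∫ ω, g (T ω) ∂μ| ≤ M * ∫ z, |g z| := by
  have hgT : Integrable g (μ.map T) := (hg.smul_measure ENNReal.ofReal_ne_top).mono_measure h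
  rw [← integral_map hT hgT.aestronglyMeasurable]
  calc |∫ z, g z ∂μ.map T| ≤ ∫ z, |g z| ∂μ.map T := abs_integral_le_integral_abs
    _ ≤ ∫ z, |g z| ∂(ENNReal.ofReal M • volume) :=
      integral_mono_measure h (ae_of_all _ fun _ => abs_nonneg _)
        (hg.abs.smul_measure ENNReal.ofReal_ne_top)
    _ = M * ∫ z, |g z| := by rw [integral_smul_measure, ENNReal.toReal_ofReal hM, smul_eq_mul]

end BoundedDensity

theorem abs_covariance_comp_le {Ω : Type*} [MeasurableSpace Ω] {μ : Measure Ω}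
    [IsProbabilityMeasure μ] {X Y : Ω → ℝ} (hX : Measurable X) (hY : Measurable Y)
    {k : ℝ → ℝ} (hk : Integrable k) (hkbd : ∃ M, ∀ t, |k t| ≤ M) {p1 p2 : ℝ}
    (hX1 : μ.map X ≤ ENNReal.ofReal p1 • volume) (hY1 : μ.map Y ≤ ENNReal.ofReal p1 • volume)
    (hXY : μ.map (fun ω => (X ω, Y ω)) ≤ ENNReal.ofReal p2 • volume) :
    |cov[fun ω => k (X ω), fun ω => k (Y ω); μ]|
      ≤ p2 * (∫ t, |k t|) ^ 2 + p1 ^ 2 * (∫ t, |k t|) ^ 2 := by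
  obtain ⟨M, hM⟩ := hkbd
  have hp1 := (pos_of_map_le_smul_volume hX.aemeasurable hX1).le
  have hp2 := (pos_of_map_le_smul_volume (hX.prodMk hY).aemeasurable hXY).le
  have memLp_comp {T : Ω → ℝ} (hT : Measurable T) (hT1 : μ.map T ≤ ENNReal.ofReal p1 • volume) :
      MemLp (fun ω => k (T ω)) 2 μ :=
    have hkT : Integrable k (μ.map T) := (hk.smul_measure ENNReal.ofReal_ne_top).mono_measure hT1
    MemLp.of_bound (hkT.aestronglyMeasurable.comp_aemeasurable hT.aemeasurable) M
      (ae_of_all _ fun ω => hM (T ω))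
  have mean_le {T : Ω → ℝ} (hT : Measurable T) (hT1 : μ.map T ≤ ENNReal.ofReal p1 • volume) :
      |∫ ω, k (T ω) ∂μ| ≤ p1 * ∫ t, |k t| :=
    abs_integral_comp_le_of_map_le_smul_volume hT.aemeasurable hp1 hT1 hk
  have hprod : |∫ ω, k (X ω) * k (Y ω) ∂μ| ≤ p2 * (∫ t, |k t|) ^ 2 := by
    have hkk : Integrable (fun z : ℝ × ℝ => k z.1 * k z.2) := by
      rw [Measure.volume_eq_prod]; exact hk.mul_prod hk
    have hI : ∫ z : ℝ × ℝ, |k z.1 * k z.2| = (∫ t, |k t|) ^ 2 := by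
      simp_rw [abs_mul]
      rw [Measure.volume_eq_prod, sq]
      exact integral_prod_mul (fun t => |k t|) (fun t => |k t|)
    rw [← hI]
    exact abs_integral_comp_le_of_map_le_smul_volume (hX.prodMk hY).aemeasurable hp2 hXY hkk
  rw [covariance_eq_sub (memLp_comp hX hX1) (memLp_comp hY hY1)]
  calc _ ≤ |∫ ω, k (X ω) * k (Y ω) ∂μ| + |∫ ω, k (X ω) ∂μ| * |∫ ω, k (Y ω) ∂μ| := by
        rw [← abs_mul]; exact abs_sub _ _
    _ ≤ p2 * (∫ t, |k t|) ^ 2 + (p1 * ∫ t, |k t|) * (p1 * ∫ t, |k t|) := by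
        gcongr
        exacts [mean_le hX hX1, mean_le hY hY1]
    _ = _ := by ring

theorem integral_abs_comp_sub_div (K : ℝ → ℝ) {b : ℝ} (hb : 0 < b) (x : ℝ) :
    ∫ u, |K ((x - u) / b)| = b * ∫ t, |K t| := by
  rw [integral_sub_left_eq_self (fun v => |K (v / b)|), Measure.integral_comp_div (fun t => |K t|),
    abs_of_pos hb, smul_eq_mul]

/-- Covariance bound for kernel variables: if `(X, Y)` has a joint density bounded by `pbar2`
and marginal densities bounded by `pbar1`, then
`|E[(Z_X - E Z_X)(Z_Y - E Z_Y)]| ≤ (pbar2 (∫|K|)² + pbar1² (∫|K|)²) * b`,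
where `Z_X = b^{-1/2} K((x - X)/b)` and similarly for `Y`. -/
theorem stmt3 {Ω : Type*} [MeasurableSpace Ω] (μ : Measure Ω) [IsProbabilityMeasure μ]
    (X Y : Ω → ℝ) (hX : Measurable X) (hY : Measurable Y)
    (K : ℝ → ℝ) (hKint : Integrable K) (hKbd : ∃ M : ℝ, ∀ t, |K t| ≤ M)
    (p2 : ℝ × ℝ → ℝ) (pbar2 : ℝ) (hp2 : ∀ z, p2 z ≤ pbar2)
    (hdens2 : ∀ s : Set (ℝ × ℝ), MeasurableSet s →
      μ ((fun ω => (X ω, Y ω)) ⁻¹' s) = ENNReal.ofReal (∫ z in s, p2 z))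
    (pX pY : ℝ → ℝ) (pbar1 : ℝ) (hpX : ∀ y, pX y ≤ pbar1) (hpY : ∀ y, pY y ≤ pbar1)
    (hdensX : ∀ s : Set ℝ, MeasurableSet s →
      μ (X ⁻¹' s) = ENNReal.ofReal (∫ y in s, pX y))
    (hdensY : ∀ s : Set ℝ, MeasurableSet s →
      μ (Y ⁻¹' s) = ENNReal.ofReal (∫ y in s, pY y))
    (b : ℝ) (hb : 0 < b) (x : ℝ) :
    |∫ ω, ((1 / Real.sqrt b) * K ((x - X ω) / b)
            - ∫ ω', (1 / Real.sqrt b) * K ((x - X ω') / b) ∂μ)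
         * ((1 / Real.sqrt b) * K ((x - Y ω) / b)
            - ∫ ω', (1 / Real.sqrt b) * K ((x - Y ω') / b) ∂μ) ∂μ|
      ≤ (pbar2 * (∫ t, |K t|) ^ 2 + pbar1 ^ 2 * (∫ t, |K t|) ^ 2) * b := by
  set k : ℝ → ℝ := fun u => 1 / Real.sqrt b * K ((x - u) / b)
  have hk : Integrable k := ((hKint.comp_div hb.ne').comp_sub_left x).const_mul _
  have hkbd : ∃ M, ∀ t, |k t| ≤ M := by
    obtain ⟨M, hM⟩ := hKbd
    refine ⟨1 / Real.sqrt b * M, fun t => ?_⟩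
    rw [abs_mul, abs_of_nonneg (by positivity)]
    exact mul_le_mul_of_nonneg_left (hM _) (by positivity)
  have hkL1 : (∫ t, |k t|) ^ 2 = b * (∫ t, |K t|) ^ 2 := by
    simp_rw [k, abs_mul, integral_const_mul, integral_abs_comp_sub_div K hb x,
      abs_of_nonneg (by positivity : 0 ≤ 1 / Real.sqrt b)]
    rw [mul_pow, mul_pow, div_pow, Real.sq_sqrt hb.le]
    field_simp
  have hcov := abs_covariance_comp_le hX hY hk hkbd
    (map_le_smul_volume_of_density_le hX hpX hdensX)
    (map_le_smul_volume_of_density_le hY hpY hdensY)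
    (map_le_smul_volume_of_density_le (hX.prodMk hY) hp2 hdens2)
  rw [hkL1] at hcov
  show |cov[fun ω => k (X ω), fun ω => k (Y ω); μ]| ≤ _
  exact hcov.trans_eq (by ring)
end

section
/- Let D, T be independent real random variables and K : ℝ → ℝ bounded integrable, b > 0, x ∈ ℝ. Suppose T has a c-Lipschitz density p_T. Define Z = b^{-1/2} K((x − D − T)/b). Then ‖E(Z | D) − E Z‖_α ≤ 2c · (∫|K(t)|dt) · b^{1/2} · ‖D‖_α for any α ≥ 1 with E|D|^α < ∞. -/
open MeasureTheory ProbabilityTheory Filter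
open scoped ENNReal NNReal

/-! Conditioning on `D` integrates out the independent `T`: with `k u = b^{-1/2} K (u / b)`,
`E(Z | D) = g D` for `g d = ∫ p_T(t) k(x - d - t) dt = ∫ p_T(x - d - u) k(u) du`. In the second
form `d` only enters through the density, so `g` is Lipschitz with constant
`c ∫ |k| = c √b ∫ |K|`. For an `L`-Lipschitz `g`, `|g D - g 0| ≤ L |D|` and centring at most doubles
an `L^α` norm, whence `‖g D - E g D‖_α ≤ 2 L ‖D‖_α`. Since the law of `T`, and hence that of
`x - D - T`, is absolutely continuous, `Z` only depends on the a.e. class of `K`. -/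

theorem LipschitzWith.integral_mul_comp_sub {p k : ℝ → ℝ} {c : ℝ≥0} (hp : LipschitzWith c p)
    (hk : Integrable k) (hint : ∀ a, Integrable fun t => p t * k (a - t)) :
    LipschitzWith (c * (∫ u, |k u|).toNNReal) fun a => ∫ t, p t * k (a - t) := by
  have hshift : ∀ a, ∫ t, p t * k (a - t) = ∫ u, p (a - u) * k u := fun a => by
    simpa only [sub_sub_cancel] using
      integral_sub_left_eq_self (fun u => p (a - u) * k u) volume a
  refine LipschitzWith.of_dist_le_mul fun a a' => ?_
  have hint' : ∀ a, Integrable fun u => p (a - u) * k u := fun a => by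
    simpa only [sub_sub_cancel] using (hint a).comp_sub_left a
  rw [Real.dist_eq, Real.dist_eq, hshift, hshift, ← integral_sub (hint' a) (hint' a'),
    NNReal.coe_mul, Real.coe_toNNReal _ (integral_nonneg fun _ => abs_nonneg _)]
  calc |∫ u, (p (a - u) * k u - p (a' - u) * k u)|
      ≤ ∫ u, |p (a - u) * k u - p (a' - u) * k u| := abs_integral_le_integral_abs
    _ ≤ ∫ u, c * |a - a'| * |k u| := by
        refine integral_mono_of_nonneg (ae_of_all _ fun _ => abs_nonneg _)
          (hk.abs.const_mul _) (ae_of_all _ fun u => ?_)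
        have hpu := hp.dist_le_mul (a - u) (a' - u)
        rw [Real.dist_eq, Real.dist_eq, sub_sub_sub_cancel_right] at hpu
        dsimp only
        rw [← sub_mul, abs_mul]
        exact mul_le_mul_of_nonneg_right hpu (abs_nonneg _)
    _ = c * (∫ u, |k u|) * |a - a'| := by rw [integral_const_mul]; ring

def IsRealDensity {X : Type*} [MeasurableSpace X] (ν ρ : Measure X) (f : X → ℝ) : Prop :=
  ∀ s, MeasurableSet s → ν s = ENNReal.ofReal (∫ y in s, f y ∂ρ)

namespace IsRealDensity

variable {X : Type*} [MeasurableSpace X] {ν ρ : Measure X} [IsProbabilityMeasure ν] {f : X → ℝ}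

theorem integrable (h : IsRealDensity ν ρ f) : Integrable f ρ := by
  by_contra hf
  simpa [integral_undef hf] using h Set.univ .univ

theorem integral_eq_one (h : IsRealDensity ν ρ f) : ∫ y, f y ∂ρ = 1 := by
  have := h Set.univ .univ
  rwa [measure_univ, Measure.restrict_univ, eq_comm, ENNReal.ofReal_eq_one] at this

theorem setIntegral_nonneg (h : IsRealDensity ν ρ f) {s : Set X} (hs : MeasurableSet s) :
    0 ≤ ∫ y in s, f y ∂ρ := by
  by_contra! hneg
  -- then `ν s = 0`, which forces `∫ y in sᶜ, f y ∂ρ = 1 = ∫ y, f y ∂ρ`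
  have hsum := measure_add_measure_compl (μ := ν) hs
  rw [h s hs, h sᶜ hs.compl, ENNReal.ofReal_of_nonpos hneg.le, zero_add, measure_univ,
    ENNReal.ofReal_eq_one] at hsum
  linarith [integral_add_compl hs h.integrable, h.integral_eq_one]

theorem ae_nonneg (h : IsRealDensity ν ρ f) : 0 ≤ᵐ[ρ] f :=
  ae_nonneg_of_forall_setIntegral_nonneg h.integrable fun _ hs _ => h.setIntegral_nonneg hs

theorem eq_withDensity (h : IsRealDensity ν ρ f) :
    ν = ρ.withDensity fun y => ENNReal.ofReal (f y) := by
  ext s hs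
  rw [h s hs, withDensity_apply _ hs, ofReal_integral_eq_lintegral_ofReal h.integrable.integrableOn
    (ae_restrict_of_ae h.ae_nonneg)]

theorem absolutelyContinuous (h : IsRealDensity ν ρ f) : ν ≪ ρ :=
  h.eq_withDensity ▸ withDensity_absolutelyContinuous _ _

theorem integral_eq {E : Type*} [NormedAddCommGroup E] [NormedSpace ℝ E]
    (h : IsRealDensity ν ρ f) (φ : X → E) :
    ∫ y, φ y ∂ν = ∫ y, f y • φ y ∂ρ := by
  rw [h.eq_withDensity, integral_withDensity_eq_integral_toReal_smul₀
    h.integrable.1.aemeasurable.ennreal_ofReal (ae_of_all _ fun _ => ENNReal.ofReal_lt_top)]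
  refine integral_congr_ae ?_
  filter_upwards [h.ae_nonneg] with y hy
  rw [ENNReal.toReal_ofReal hy]

end IsRealDensity

theorem IsRealDensity.lipschitzWith_integral_comp_const_sub_sub {ν : Measure ℝ}
    [IsProbabilityMeasure ν] {p k : ℝ → ℝ} {c : ℝ≥0} {C : ℝ}
    (h : IsRealDensity ν volume p) (hp : LipschitzWith c p) (hk : Integrable k)
    (hk_bdd : ∀ u, ‖k u‖ ≤ C) (a : ℝ) :
    LipschitzWith (c * (∫ u, |k u|).toNNReal) fun d => ∫ t, k (a - d - t) ∂ν := by
  have hconv := hp.integral_mul_comp_sub hk fun a =>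
    h.integrable.mul_bdd (hk.comp_sub_left a).1 (ae_of_all _ fun _ => hk_bdd _)
  refine LipschitzWith.of_dist_le_mul fun d d' => ?_
  simpa only [h.integral_eq, smul_eq_mul, dist_sub_left] using
    hconv.dist_le_mul (a - d) (a - d')

namespace ProbabilityTheory

theorem IndepFun.map_sub_absolutelyContinuous_volume {Ω : Type*} {mΩ : MeasurableSpace Ω}
    {μ : Measure Ω} [IsFiniteMeasure μ] {U V : Ω → ℝ} (hU : Measurable U) (hV : Measurable V)
    (hUV : IndepFun U V μ) (hV' : μ.map V ≪ volume) : μ.map (U - V) ≪ volume := by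
  have hnegV : μ.map (-V) ≪ volume := by
    rw [show -V = Neg.neg ∘ V from rfl, ← Measure.map_map measurable_neg hV]
    simpa using hV'.map measurable_neg
  rw [sub_eq_add_neg, (hUV.comp measurable_id measurable_neg).map_add_eq_map_conv_map hU hV.neg]
  exact Measure.conv_absolutelyContinuous hnegV

theorem IndepFun.condExp_comap_ae_eq_integral_map {Ω β γ E : Type*} {mΩ : MeasurableSpace Ω}
    {mβ : MeasurableSpace β} [MeasurableSpace γ] [StandardBorelSpace γ] [Nonempty γ]
    [NormedAddCommGroup E] [NormedSpace ℝ E] [CompleteSpace E]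
    {μ : Measure Ω} [IsFiniteMeasure μ] {X : Ω → β} {Y : Ω → γ} {f : β × γ → E}
    (hX : Measurable X) (hY : Measurable Y) (hXY : IndepFun X Y μ)
    (hf : AEStronglyMeasurable f (μ.map fun ω => (X ω, Y ω)))
    (hf_int : Integrable (fun ω => f (X ω, Y ω)) μ) :
    μ[fun ω => f (X ω, Y ω) | mβ.comap X] =ᵐ[μ] fun ω => ∫ y, f (X ω, y) ∂(μ.map Y) := by
  have hκ : condDistrib Y X μ =ᵐ[μ.map X] Kernel.const β (μ.map Y) := by
    refine condDistrib_ae_eq_of_measure_eq_compProd X hY.aemeasurable ?_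
    rw [Measure.compProd_const]
    exact (indepFun_iff_map_prod_eq_prod_map_map hX.aemeasurable hY.aemeasurable).mp hXY
  filter_upwards [condExp_prod_ae_eq_integral_condDistrib₀ hX hY.aemeasurable hf hf_int,
    ae_of_ae_map hX.aemeasurable hκ] with ω hω hκω
  rw [hω, hκω, Kernel.const_apply]

theorem IndepFun.condExp_comp_const_sub_sub_ae_eq {Ω E : Type*} {mΩ : MeasurableSpace Ω}
    [NormedAddCommGroup E] [NormedSpace ℝ E] [CompleteSpace E]
    {μ : Measure Ω} [IsFiniteMeasure μ] {D T : Ω → ℝ} (hD : Measurable D) (hT : Measurable T)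
    (hDT : IndepFun D T μ) (hT_ac : μ.map T ≪ volume) {k : ℝ → E} {C : ℝ}
    (hk : AEStronglyMeasurable k volume) (hk_bdd : ∀ u, ‖k u‖ ≤ C) (a : ℝ) :
    μ[fun ω => k (a - D ω - T ω) | MeasurableSpace.comap D Real.measurableSpace]
      =ᵐ[μ] fun ω => ∫ t, k (a - D ω - t) ∂(μ.map T) := by
  have hac : μ.map (fun ω => a - D ω - T ω) ≪ volume :=
    (hDT.comp (measurable_const.sub measurable_id) measurable_id
      ).map_sub_absolutelyContinuous_volume (hD.const_sub a) hT hT_ac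
  have hf : AEStronglyMeasurable (fun q : ℝ × ℝ => k (a - q.1 - q.2))
      (μ.map fun ω => (D ω, T ω)) :=
    hk.comp_quasiMeasurePreserving ⟨by fun_prop, by
      rw [Measure.map_map (by fun_prop) (hD.prodMk hT)]; exact hac⟩
  exact hDT.condExp_comap_ae_eq_integral_map hD hT hf
    (.of_bound (hf.comp_measurable (hD.prodMk hT)) _ (ae_of_all _ fun _ => hk_bdd _))

end ProbabilityTheory

theorem integral_abs_inv_sqrt_mul_comp_div {K : ℝ → ℝ} {b : ℝ} (hb : 0 < b) :
    ∫ u, |1 / Real.sqrt b * K (u / b)| = Real.sqrt b * ∫ t, |K t| := by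
  simp only [abs_mul, integral_const_mul, Measure.integral_comp_div (fun t => |K t|) b,
    abs_of_pos hb, smul_eq_mul, abs_of_nonneg (by positivity : 0 ≤ 1 / Real.sqrt b)]
  rw [← mul_assoc, one_div_mul_eq_div, Real.div_sqrt]

theorem memLp_ofReal_of_integrable_abs_rpow {Ω : Type*} {mΩ : MeasurableSpace Ω}
    {μ : Measure Ω} {X : Ω → ℝ} (hX : AEStronglyMeasurable X μ) {α : ℝ} (hα : 0 < α)
    (hXα : Integrable (fun ω => |X ω| ^ α) μ) : MemLp X (ENNReal.ofReal α) μ := by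
  refine (integrable_norm_rpow_iff hX (by positivity) ENNReal.ofReal_ne_top).mp ?_
  simpa [ENNReal.toReal_ofReal hα.le] using hXα

section Centering

variable {Ω E F : Type*} {mΩ : MeasurableSpace Ω} {μ : Measure Ω} [IsProbabilityMeasure μ]
  [NormedAddCommGroup F] [NormedSpace ℝ F] {p : ℝ≥0∞}

theorem eLpNorm_sub_integral_le {Y : Ω → F} (hY : AEStronglyMeasurable Y μ) (hp : 1 ≤ p) :
    eLpNorm (fun ω => Y ω - ∫ ω', Y ω' ∂μ) p μ ≤ 2 * eLpNorm Y p μ := by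
  have hmean : eLpNorm (fun _ : Ω => ∫ ω', Y ω' ∂μ) p μ ≤ eLpNorm Y p μ := by
    rw [eLpNorm_const _ (by positivity) (IsProbabilityMeasure.ne_zero μ), measure_univ,
      ENNReal.one_rpow, mul_one]
    calc ‖∫ ω', Y ω' ∂μ‖ₑ ≤ eLpNorm Y 1 μ :=
          (enorm_integral_le_lintegral_enorm Y).trans_eq eLpNorm_one_eq_lintegral_enorm.symm
      _ ≤ eLpNorm Y p μ := eLpNorm_le_eLpNorm_of_exponent_le hp hY
  calc eLpNorm (fun ω => Y ω - ∫ ω', Y ω' ∂μ) p μ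
      ≤ eLpNorm Y p μ + eLpNorm (fun _ : Ω => ∫ ω', Y ω' ∂μ) p μ :=
        eLpNorm_sub_le hY aestronglyMeasurable_const hp
    _ ≤ 2 * eLpNorm Y p μ := by rw [two_mul]; gcongr

theorem LipschitzWith.eLpNorm_comp_sub_integral_le [NormedAddCommGroup E] [CompleteSpace F]
    {g : E → F} {L : ℝ≥0} (hg : LipschitzWith L g) {X : Ω → E} (hX : MemLp X p μ) (hp : 1 ≤ p) :
    eLpNorm (fun ω => g (X ω) - ∫ ω', g (X ω') ∂μ) p μ ≤ 2 * L * eLpNorm X p μ := by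
  set Y : Ω → F := fun ω => g (X ω) - g 0
  have hYX : ∀ ω, ‖Y ω‖ ≤ L * ‖X ω‖ := fun ω => by
    simpa only [dist_eq_norm, sub_zero] using hg.dist_le_mul (X ω) 0
  have hY : AEStronglyMeasurable Y μ :=
    (hg.continuous.comp_aestronglyMeasurable hX.1).sub aestronglyMeasurable_const
  have hY_int : Integrable Y μ :=
    (hX.integrable hp).norm.const_mul L |>.mono' hY (ae_of_all _ hYX)
  have hcenter : (fun ω => g (X ω) - ∫ ω', g (X ω') ∂μ) = fun ω => Y ω - ∫ ω', Y ω' ∂μ := by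
    have hgX : Integrable (fun ω => g (X ω)) μ :=
      (hY_int.add (integrable_const (g 0))).congr (ae_of_all _ fun ω => by simp [Y])
    funext ω
    simp [Y, integral_sub hgX (integrable_const (g 0))]
  calc eLpNorm (fun ω => g (X ω) - ∫ ω', g (X ω') ∂μ) p μ
      ≤ 2 * eLpNorm Y p μ := hcenter ▸ eLpNorm_sub_integral_le hY hp
    _ ≤ 2 * (L * eLpNorm X p μ) := by
        gcongr
        refine (eLpNorm_le_nnreal_smul_eLpNorm_of_ae_le_mul (ae_of_all _ fun ω => ?_) p).trans_eq
          (ENNReal.smul_def _ _)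
        exact_mod_cast hYX ω
    _ = 2 * L * eLpNorm X p μ := (mul_assoc _ _ _).symm

end Centering

/-- For independent `D, T` with `T` having a `c`-Lipschitz density, a bounded integrable
kernel `K`, and `Z = b^{-1/2} K((x - D - T)/b)`:
`‖E(Z | D) - E Z‖_α ≤ 2 c (∫|K|) √b ‖D‖_α` for `α ≥ 1` with `E|D|^α < ∞`. -/
theorem stmt16 {Ω : Type*} [mΩ : MeasurableSpace Ω] (μ : Measure Ω) [IsProbabilityMeasure μ]
    (D T : Ω → ℝ) (hD : Measurable D) (hT : Measurable T)
    (hindep : IndepFun D T μ)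
    (K : ℝ → ℝ) (hKint : Integrable K) (hKbd : ∃ M : ℝ, ∀ t, |K t| ≤ M)
    (pT : ℝ → ℝ) (c : NNReal) (hlip : LipschitzWith c pT)
    (hdens : ∀ s : Set ℝ, MeasurableSet s →
      μ (T ⁻¹' s) = ENNReal.ofReal (∫ y in s, pT y))
    (b x : ℝ) (hb : 0 < b) (α : ℝ) (hα : 1 ≤ α)
    (hDα : Integrable (fun ω => |D ω| ^ α) μ) :
    eLpNorm (fun ω =>
        (MeasureTheory.condExp (MeasurableSpace.comap D Real.measurableSpace) μ
            (fun ω' => (1 / Real.sqrt b) * K ((x - D ω' - T ω') / b)) ω)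
          - ∫ ω', (1 / Real.sqrt b) * K ((x - D ω' - T ω') / b) ∂μ)
      (ENNReal.ofReal α) μ
      ≤ ENNReal.ofReal (2 * (c : ℝ) * (∫ t, |K t|) * Real.sqrt b)
          * eLpNorm D (ENNReal.ofReal α) μ := by
  obtain ⟨M, hM⟩ := hKbd
  set k : ℝ → ℝ := fun u => 1 / Real.sqrt b * K (u / b)
  have hk : Integrable k := (hKint.comp_div hb.ne').const_mul _
  have hk_bdd : ∀ u, ‖k u‖ ≤ 1 / Real.sqrt b * M := fun u => by
    rw [norm_mul, Real.norm_eq_abs, abs_of_nonneg (by positivity)]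
    exact mul_le_mul_of_nonneg_left (hM _) (by positivity)
  have := Measure.isProbabilityMeasure_map (μ := μ) hT.aemeasurable
  have hτ : IsRealDensity (μ.map T) volume pT := fun s hs => by
    rw [Measure.map_apply hT hs]; exact hdens s hs
  set g : ℝ → ℝ := fun d => ∫ t, k (x - d - t) ∂(μ.map T)
  have hcond := hindep.condExp_comp_const_sub_sub_ae_eq hD hT hτ.absolutelyContinuous hk.1 hk_bdd x
  have hg : LipschitzWith (c * (Real.sqrt b * ∫ t, |K t|).toNNReal) g := by
    simpa only [k, integral_abs_inv_sqrt_mul_comp_div hb] using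
      hτ.lipschitzWith_integral_comp_const_sub_sub hlip hk hk_bdd x
  have hmean : ∫ ω, k (x - D ω - T ω) ∂μ = ∫ ω, g (D ω) ∂μ :=
    (integral_condExp hD.comap_le).symm.trans (integral_congr_ae hcond)
  calc _ = eLpNorm (fun ω => g (D ω) - ∫ ω', g (D ω') ∂μ) (ENNReal.ofReal α) μ :=
        eLpNorm_congr_ae (by filter_upwards [hcond] with ω hω; rw [hω, hmean])
    _ ≤ 2 * ↑(c * (Real.sqrt b * ∫ t, |K t|).toNNReal) * eLpNorm D (ENNReal.ofReal α) μ :=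
        hg.eLpNorm_comp_sub_integral_le
          (memLp_ofReal_of_integrable_abs_rpow hD.aestronglyMeasurable (by linarith) hDα)
          (ENNReal.one_le_ofReal.mpr hα)
    _ = _ := by
        rw [← ENNReal.ofReal_coe_nnreal, ← ENNReal.ofReal_ofNat 2,
          ← ENNReal.ofReal_mul (by norm_num)]
        push_cast [Real.coe_toNNReal _ (by positivity : 0 ≤ Real.sqrt b * ∫ t, |K t|)]
        ring_nf
end
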